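/- The ring A⋈^f J is local if and only if A is local and J is contained in the Jacobson radical Jac(B) of B. Moreover, if A is local with maximal ideal M and J ⊆ Jac(B), then the unique maximal ideal of A⋈^f J is M⋈^f J := {(m, f(m)+j) : m ∈ M, j ∈ J}. -/
import Mathlib


section Amalgamation

variable {A B : Type*} [CommRing A] [CommRing B]

/-- The amalgamation `A ⋈^f J` of `A` with `B` along the ideal `J` of `B` with respect to
the ring homomorphism `f : A → B`, realized as the subring
`{(a, f a + j) | a ∈ A, j ∈ J}` of `A × B`. -/
def amalg (f : A →+* B) (J : Ideal B) : Subring (A × B) where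
  carrier := {x : A × B | x.2 - f x.1 ∈ J}
  zero_mem' := by simp
  one_mem' := by simp
  add_mem' := by
    intro x y hx hy
    simp only [Set.mem_setOf_eq, Prod.fst_add, Prod.snd_add, map_add] at *
    have h : x.2 + y.2 - (f x.1 + f y.1) = x.2 - f x.1 + (y.2 - f y.1) := by ring
    rw [h]; exact J.add_mem hx hy
  neg_mem' := by
    intro x hx
    simp only [Set.mem_setOf_eq, Prod.fst_neg, Prod.snd_neg, map_neg] at *
    have h : -x.2 - -f x.1 = -(x.2 - f x.1) := by ring
    rw [h]; exact J.neg_mem hx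
  mul_mem' := by
    intro x y hx hy
    simp only [Set.mem_setOf_eq, Prod.fst_mul, Prod.snd_mul, map_mul] at *
    have h : x.2 * y.2 - f x.1 * f y.1 = x.2 * (y.2 - f y.1) + (x.2 - f x.1) * f y.1 := by ring
    rw [h]
    exact J.add_mem (J.mul_mem_left _ hy) (J.mul_mem_right _ hx)

lemma mem_amalg_iff (f : A →+* B) (J : Ideal B) (x : A × B) :
    x ∈ amalg f J ↔ x.2 - f x.1 ∈ J := Iff.rfl

/-- The natural projection `p_A : A ⋈^f J → A`. -/
def pA (f : A →+* B) (J : Ideal B) : amalg f J →+* A :=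
  (RingHom.fst A B).comp (amalg f J).subtype

/-- The natural projection `p_B : A ⋈^f J → B`. -/
def pB (f : A →+* B) (J : Ideal B) : amalg f J →+* B :=
  (RingHom.snd A B).comp (amalg f J).subtype

/-- For an ideal `P` of `A`, the ideal `P'^f = P ⋈^f J = {(p, f p + j) | p ∈ P, j ∈ J}`
of `A ⋈^f J`. -/
def idealPf (f : A →+* B) (J : Ideal B) (P : Ideal A) : Ideal (amalg f J) :=
  Submodule.copy (Ideal.comap (pA f J) P)
    {x : amalg f J | ∃ p ∈ P, ∃ j ∈ J, (x : A × B) = (p, f p + j)}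
    (by
      ext x
      simp only [Set.mem_setOf_eq, SetLike.mem_coe, Ideal.mem_comap]
      constructor
      · rintro ⟨p, hp, j, hj, hx⟩
        have h1 : pA f J x = p := by
          show (x : A × B).1 = p
          rw [hx]
        rw [h1]; exact hp
      · intro hx
        refine ⟨(x : A × B).1, hx, (x : A × B).2 - f (x : A × B).1,
          (mem_amalg_iff f J _).mp x.2, ?_⟩
        ext <;> simp)

end Amalgamation


section Aux

variable {A B : Type*} [CommRing A] [CommRing B]

lemma pA_surjective (f : A →+* B) (J : Ideal B) : Function.Surjective (pA f J) :=
  fun a => ⟨⟨(a, f a), by simp [mem_amalg_iff]⟩, rfl⟩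

lemma pA_apply (f : A →+* B) (J : Ideal B) (x : amalg f J) : pA f J x = (x : A × B).1 := rfl

lemma amalg_isUnit_iff (f : A →+* B) (J : Ideal B) (hJ : J ≤ (⊥ : Ideal B).jacobson)
    (x : amalg f J) : IsUnit x ↔ IsUnit (x : A × B).1 := by
  constructor
  · intro h
    exact h.map (pA f J)
  · intro ha
    obtain ⟨a', ha'⟩ := isUnit_iff_exists_inv.mp ha
    set a := (x : A × B).1 with ha_def
    set b := (x : A × B).2 with hb_def
    have hj : b - f a ∈ J := (mem_amalg_iff f J _).mp x.2
    have hjac : b - f a ∈ (⊥ : Ideal B).jacobson := hJ hj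
    have hfa : f a * f a' = 1 := by rw [← map_mul, ha', map_one]
    have hu : IsUnit ((b - f a) * f a' + 1) := (Ideal.mem_jacobson_bot.mp hjac) (f a')
    have hb_eq : b = f a * ((b - f a) * f a' + 1) := by
      have : f a * ((b - f a) * f a' + 1) = (f a * f a') * (b - f a) + f a := by ring
      rw [this, hfa]; ring
    have hbu : IsUnit b := hb_eq ▸ (ha.map f).mul hu
    obtain ⟨b', hb'⟩ := isUnit_iff_exists_inv.mp hbu
    have hmem : b' - f a' ∈ J := by
      have key : b' - f a' = (-(b' * f a')) * (b - f a) := by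
        linear_combination (f a') * hb' - b' * hfa
      rw [key]
      exact J.mul_mem_left _ hj
    refine isUnit_iff_exists_inv.mpr ⟨⟨(a', b'), hmem⟩, ?_⟩
    ext
    · exact ha'
    · exact hb'

lemma amalg_nontrivial_down (f : A →+* B) (J : Ideal B) [Nontrivial (amalg f J)] :
    Nontrivial A := by
  by_contra h
  have hsub : Subsingleton A := not_nontrivial_iff_subsingleton.mp h
  have h10 : (1 : A) = 0 := Subsingleton.elim _ _
  have h10B : (1 : B) = 0 := by
    calc (1 : B) = f 1 := (map_one f).symm
    _ = f 0 := by rw [h10]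
    _ = 0 := map_zero f
  have : (1 : amalg f J) = 0 := by
    ext
    · exact h10
    · exact h10B
  exact one_ne_zero this

end Aux

/-- `A ⋈^f J` is local iff `A` is local and `J ⊆ Jac(B)`; moreover if `A` is local with
maximal ideal `M` and `J ⊆ Jac(B)`, then `M ⋈^f J` is the unique maximal ideal
of `A ⋈^f J`. -/
theorem stmt8 {A B : Type*} [CommRing A] [CommRing B] (f : A →+* B) (J : Ideal B) :
    (IsLocalRing (amalg f J) ↔ (IsLocalRing A ∧ J ≤ (⊥ : Ideal B).jacobson)) ∧
    (∀ M : Ideal A, M.IsMaximal → (∀ N : Ideal A, N.IsMaximal → N = M) →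
      J ≤ (⊥ : Ideal B).jacobson →
      ((idealPf f J M).IsMaximal ∧
        ∀ H : Ideal (amalg f J), H.IsMaximal → H = idealPf f J M)) := by
  have hiff : IsLocalRing (amalg f J) ↔ (IsLocalRing A ∧ J ≤ (⊥ : Ideal B).jacobson) := by
    constructor
    · intro hloc
      haveI : Nontrivial A := amalg_nontrivial_down f J
      constructor
      · refine IsLocalRing.of_isUnit_or_isUnit_one_sub_self (fun a => ?_)
        have hmem : (a, f a) ∈ amalg f J := by simp [mem_amalg_iff]
        set x : amalg f J := ⟨(a, f a), hmem⟩ with hx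
        rcases IsLocalRing.isUnit_or_isUnit_one_sub_self x with h | h
        · exact Or.inl (h.map (pA f J))
        · exact Or.inr (h.map (pA f J))
      · intro j hj
        rw [Ideal.mem_jacobson_bot]
        intro y
        have hmem : ((0 : A), -(j * y)) ∈ amalg f J := by
          simp only [mem_amalg_iff, map_zero, sub_zero]
          exact J.neg_mem (J.mul_mem_right _ hj)
        set x : amalg f J := ⟨((0 : A), -(j * y)), hmem⟩ with hx
        rcases IsLocalRing.isUnit_or_isUnit_one_sub_self x with h | h
        · exfalso
          have h0 : IsUnit (0 : A) := h.map (pA f J)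
          simp at h0
        · have hB : IsUnit ((1 : B) - -(j * y)) := h.map (pB f J)
          have : (1 : B) - -(j * y) = j * y + 1 := by ring
          rwa [this] at hB
    · rintro ⟨hA, hJ⟩
      haveI : Nontrivial (amalg f J) :=
        ⟨⟨0, 1, fun h => by
          have : (0 : A) = 1 := congrArg (fun z : amalg f J => (z : A × B).1) h
          exact zero_ne_one this⟩⟩
      refine IsLocalRing.of_isUnit_or_isUnit_one_sub_self (fun x => ?_)
      rcases IsLocalRing.isUnit_or_isUnit_one_sub_self ((x : A × B).1) with h | h
      · exact Or.inl ((amalg_isUnit_iff f J hJ x).mpr h)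
      · refine Or.inr ((amalg_isUnit_iff f J hJ (1 - x)).mpr ?_)
        simpa using h
  refine ⟨hiff, ?_⟩
  intro M hM huniq hJ
  haveI hA : IsLocalRing A := IsLocalRing.of_unique_max_ideal ⟨M, hM, fun N hN => huniq N hN⟩
  haveI hloc : IsLocalRing (amalg f J) := hiff.mpr ⟨hA, hJ⟩
  have heq : idealPf f J M = Ideal.comap (pA f J) M := Submodule.copy_eq _ _ _
  haveI := hM
  have hmax : (idealPf f J M).IsMaximal := by
    rw [heq]
    exact Ideal.comap_isMaximal_of_surjective _ (pA_surjective f J)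
  refine ⟨hmax, fun H hH => ?_⟩
  rw [IsLocalRing.eq_maximalIdeal hH, IsLocalRing.eq_maximalIdeal hmax]
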